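/- Completeness of guard translation, strict-upper case: suppose ν corresponds with (r, α, t) and e ∈ ℕ. (a) If ι(r,α) = LESS and t ≤ e, then ν(x_p) < e; (b) if ι(r,α) ≠ LESS and t ≤ e − 1, then ν(x_p) < e. -/
import Mathlib


inductive Iota | LESS | MORE | EXACT
deriving DecidableEq

/-- Completeness of the guard translation, strict-upper case:
(a) if `ι = LESS` and `t ≤ e` then `ν(x_p) < e`;
(b) if `ι ≠ LESS` and `t < e` then `ν(x_p) < e`. -/
theorem guard_translation_complete_strict (ι : Iota) (t : ℕ) (νp : ℝ)
    (hfloor : ⌊νp⌋ + (if ι = .LESS then 1 else 0) = (t : ℤ))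
    (hnat : (∃ n : ℕ, νp = n) ↔ ι = .EXACT)
    (e : ℕ) :
    (ι = .LESS → t ≤ e → νp < e) ∧ (ι ≠ .LESS → t < e → νp < e) := by
  constructor
  · intro hι hte
    simp [hι] at hfloor
    have h1 : νp < ⌊νp⌋ + 1 := Int.lt_floor_add_one νp
    have : ((⌊νp⌋ : ℝ) + 1) ≤ e := by
      have : ⌊νp⌋ + 1 ≤ (e : ℤ) := by omega
      exact_mod_cast this
    linarith
  · intro hι hte
    simp [hι] at hfloor
    have h1 : νp < ⌊νp⌋ + 1 := Int.lt_floor_add_one νp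
    have : ((⌊νp⌋ : ℝ) + 1) ≤ e := by
      have : ⌊νp⌋ + 1 ≤ (e : ℤ) := by omega
      exact_mod_cast this
    linarith
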